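/- Let k ≥ 1, let G be a k-edge-connected finite simple graph on V with |V| ≥ 2, fix a root r ∈ V, and let 𝓛 be a maximal edge-covering laminar family of k-cuts avoiding r. Then: (i) every inclusion-minimal member of 𝓛 is a singleton; and (ii) if S ∈ 𝓛 has exactly one child, i.e., there is a unique inclusion-maximal member S′ of {T ∈ 𝓛 : T ⊊ S}, then S∖S′ consists of a single vertex v, this vertex has degree at least k+1 in G, and (S′, S) are snug shores for the snug vertex v. -/

import Mathlib

open Finset

variable {V : Type*} [Fintype V] [DecidableEq V]

/-- `Crosses S e`: exactly one endpoint of the edge/link `e` lies in `S`. -/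
def Crosses (S : Finset V) (e : Sym2 V) : Prop :=
  ∃ x y : V, e = s(x, y) ∧ x ∈ S ∧ y ∉ S

instance (S : Finset V) : DecidablePred (Crosses S) := fun e =>
  decidable_of_iff (∃ x y : V, e = s(x, y) ∧ x ∈ S ∧ y ∉ S) Iff.rfl

/-- The cut `δ(S)`: edges of `G` with exactly one endpoint in `S`. -/
def cutEdges (G : SimpleGraph V) [DecidableRel G.Adj] (S : Finset V) :
    Finset (Sym2 V) :=
  G.edgeFinset.filter fun e => Crosses S e

/-- `G` is `k`-edge-connected: every nonempty proper cut has at least `k` crossing edges. -/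
def EdgeConnected (G : SimpleGraph V) [DecidableRel G.Adj] (k : ℕ) : Prop :=
  ∀ S : Finset V, S.Nonempty → S ≠ Finset.univ → k ≤ (cutEdges G S).card

/-- `S` is a `k`-cut: a nonempty proper vertex set with exactly `k` crossing edges. -/
def IsCut (G : SimpleGraph V) [DecidableRel G.Adj] (k : ℕ) (S : Finset V) : Prop :=
  S.Nonempty ∧ S ≠ Finset.univ ∧ (cutEdges G S).card = k

/-- `(S₁, S₂)` are snug shores for `v` (with respect to the root `r`):
two `k`-cuts avoiding `r` with `v ∉ S₁` and `S₂ = S₁ ∪ {v}`. -/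
def SnugShores (G : SimpleGraph V) [DecidableRel G.Adj] (k : ℕ) (r v : V)
    (S₁ S₂ : Finset V) : Prop :=
  IsCut G k S₁ ∧ IsCut G k S₂ ∧ r ∉ S₁ ∧ r ∉ S₂ ∧ v ∉ S₁ ∧ S₂ = insert v S₁

/-- `v` is a snug vertex (with respect to the root `r`). -/
def Snug (G : SimpleGraph V) [DecidableRel G.Adj] (k : ℕ) (r v : V) : Prop :=
  v ≠ r ∧ k + 1 ≤ G.degree v ∧ ∃ S₁ S₂ : Finset V, SnugShores G k r v S₁ S₂

/-- A snug chain: snug vertices `u 0, …, u t` together with `k`-cuts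
`S 0, …, S (t+1)` such that `(S i, S (i+1))` are snug shores for `u i`. -/
def IsSnugChain (G : SimpleGraph V) [DecidableRel G.Adj] (k : ℕ) (r : V)
    (t : ℕ) (u : ℕ → V) (S : ℕ → Finset V) : Prop :=
  ∀ i ≤ t, Snug G k r (u i) ∧ SnugShores G k r (u i) (S i) (S (i + 1))

/-- `L` is a maximal edge-covering laminar family of `k`-cuts avoiding `r`. -/
def MaxLaminarFamily (G : SimpleGraph V) [DecidableRel G.Adj] (k : ℕ) (r : V)
    (L : Finset (Finset V)) : Prop :=
  (∀ A ∈ L, IsCut G k A ∧ r ∉ A) ∧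
  (∀ A ∈ L, ∀ B ∈ L, A ⊆ B ∨ B ⊆ A ∨ A ∩ B = ∅) ∧
  (∀ e ∈ G.edgeSet, ∃ A ∈ L, Crosses A e) ∧
  (∀ T : Finset V, IsCut G k T → r ∉ T →
    (∀ A ∈ L, T ⊆ A ∨ A ⊆ T ∨ T ∩ A = ∅) → T ∈ L)

/-!
The submodular identity `|δX| + |δY| = |δ(X ∪ Y)| + |δ(X ∩ Y)| + 2 e(X ∖ Y, Y ∖ X)` does all the
work. Suppose every member of `𝓛` strictly inside `S ∈ 𝓛` lies in `C ⊆ S` (`C = ∅` for a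
minimal member, `C = S'` for the only child). An edge inside `S ∖ C` would have to be crossed by
such a member, so `S ∖ C` is independent, and for `v ∈ S ∖ C` the identity with `X = C ∪ {v}`,
`Y = S ∖ {v}` reads `|δX| + |δY| = |δS| + |δC|`. For `C = ∅` and `|S| ≥ 2` this gives `2k ≤ k`.
For `C = S'` it makes `S' ∪ {v}` a `k`-cut laminar with `𝓛`, hence a member by maximality, which
forces `S' ∪ {v} = S`; in the same way `{v}` would be a member if `deg v = k`.
-/

theorem crosses_mk_iff {W : Type*} {S : Finset W} {x y : W} :
    Crosses S s(x, y) ↔ (x ∈ S ↔ y ∉ S) := by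
  constructor
  · rintro ⟨a, b, hab, ha, hb⟩
    rcases Sym2.eq_iff.mp hab with ⟨rfl, rfl⟩ | ⟨rfl, rfl⟩ <;> tauto
  · intro h
    by_cases hx : x ∈ S
    · exact ⟨x, y, rfl, hx, h.mp hx⟩
    · exact ⟨y, x, Sym2.eq_swap, by tauto, hx⟩

theorem SimpleGraph.card_interedges_comm {W : Type*} (G : SimpleGraph W) [DecidableRel G.Adj]
    (s t : Finset W) :
    #(G.interedges s t) = #(G.interedges t s) :=
  have := G.symm
  Rel.card_interedges_comm s t

section Cuts

variable (G : SimpleGraph V) [DecidableRel G.Adj]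

theorem card_cutEdges_eq_card_interedges (S : Finset V) :
    #(cutEdges G S) = #(G.interedges S Sᶜ) := by
  symm
  refine card_bij (fun p _ => s(p.1, p.2)) ?_ ?_ ?_
  · rintro ⟨x, y⟩ hp
    obtain ⟨hx, hy, hxy⟩ := G.mk_mem_interedges_iff.mp hp
    exact mem_filter.mpr ⟨G.mem_edgeFinset.mpr hxy, x, y, rfl, hx, mem_compl.mp hy⟩
  · rintro ⟨x, y⟩ hp ⟨x', y'⟩ hp' h
    obtain ⟨hx, hy, -⟩ := G.mk_mem_interedges_iff.mp hp
    obtain ⟨hx', -, -⟩ := G.mk_mem_interedges_iff.mp hp'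
    rcases Sym2.eq_iff.mp h with ⟨rfl, rfl⟩ | ⟨rfl, rfl⟩
    · rfl
    · exact absurd hx' (mem_compl.mp hy)
  · intro e he
    obtain ⟨he, x, y, rfl, hx, hy⟩ := mem_filter.mp he
    exact ⟨(x, y), G.mk_mem_interedges_iff.mpr ⟨hx, mem_compl.mpr hy, G.mem_edgeFinset.mp he⟩,
      rfl⟩

theorem card_interedges_eq_sum (s t : Finset V) :
    #(G.interedges s t) = ∑ p : V × V, if p.1 ∈ s ∧ p.2 ∈ t ∧ G.Adj p.1 p.2 then 1 else 0 := by
  rw [← card_filter]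
  congr 1
  ext p
  simp [SimpleGraph.mem_interedges_iff]

theorem card_cutEdges_add_card_cutEdges (X Y : Finset V) :
    #(cutEdges G X) + #(cutEdges G Y) =
      #(cutEdges G (X ∪ Y)) + #(cutEdges G (X ∩ Y)) + 2 * #(G.interedges (X \ Y) (Y \ X)) := by
  rw [two_mul]
  nth_rw 2 [G.card_interedges_comm]
  simp only [card_cutEdges_eq_card_interedges, card_interedges_eq_sum, ← sum_add_distrib]
  refine sum_congr rfl fun ⟨x, y⟩ _ => ?_
  have := G.adj_comm x y
  by_cases hX₁ : x ∈ X <;> by_cases hX₂ : y ∈ X <;> by_cases hY₁ : x ∈ Y <;>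
    by_cases hY₂ : y ∈ Y <;> simp [hX₁, hX₂, hY₁, hY₂]

theorem card_cutEdges_singleton (v : V) : #(cutEdges G {v}) = G.degree v := by
  have hpairs : G.interedges {v} {v}ᶜ = (G.neighborFinset v).image (Prod.mk v) := by
    ext ⟨x, w⟩
    simp only [SimpleGraph.mk_mem_interedges_iff, mem_singleton, mem_compl, mem_image,
      SimpleGraph.mem_neighborFinset, Prod.mk.injEq]
    constructor
    · rintro ⟨rfl, -, hxw⟩
      exact ⟨w, hxw, rfl, rfl⟩
    · rintro ⟨w, hxw, rfl, rfl⟩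
      exact ⟨rfl, (G.ne_of_adj hxw).symm, hxw⟩
  rw [card_cutEdges_eq_card_interedges, hpairs,
    card_image_of_injective _ (Prod.mk_right_injective v), G.card_neighborFinset_eq_degree]

@[simp]
theorem cutEdges_empty : cutEdges G ∅ = ∅ := by
  ext e
  simp [cutEdges, Crosses]

theorem card_cutEdges_insert_add_card_cutEdges_erase {C S : Finset V} {v : V} (hCS : C ⊆ S)
    (hvS : v ∈ S) (hvC : v ∉ C) (hv : ∀ w ∈ S \ C, ¬ G.Adj v w) :
    #(cutEdges G (insert v C)) + #(cutEdges G (S.erase v)) =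
      #(cutEdges G S) + #(cutEdges G C) := by
  have hunion : insert v C ∪ S.erase v = S := by
    ext x; by_cases x = v <;> aesop
  have hinter : insert v C ∩ S.erase v = C := by
    ext x; by_cases x = v <;> aesop
  have hcross : G.interedges (insert v C \ S.erase v) (S.erase v \ insert v C) = ∅ := by
    ext ⟨x, y⟩
    simp only [SimpleGraph.mk_mem_interedges_iff, notMem_empty, iff_false]
    rintro ⟨hx, hy, hxy⟩
    have hxv : x = v := by
      by_contra hxv
      simp only [mem_sdiff, mem_insert, mem_erase, hxv, false_or, ne_eq, not_false_eq_true,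
        true_and] at hx
      exact hx.2 (hCS hx.1)
    subst hxv
    exact hv y (by aesop) hxy
  rw [card_cutEdges_add_card_cutEdges, hunion, hinter, hcross, card_empty, mul_zero, add_zero]

end Cuts

section EdgeConnected

variable {G : SimpleGraph V} [DecidableRel G.Adj] {k : ℕ}

theorem EdgeConnected.le_card_cutEdges (hG : EdgeConnected G k) {S T : Finset V}
    (hS : S.Nonempty) (hST : S ⊆ T) (hT : T ≠ univ) : k ≤ #(cutEdges G S) :=
  hG S hS fun h => hT (univ_subset_iff.mp (h ▸ hST))

theorem EdgeConnected.card_eq_one_of_isCut (hG : EdgeConnected G k) (hk : 1 ≤ k)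
    {A : Finset V} (hA : IsCut G k A) (hind : ∀ x ∈ A, ∀ y ∈ A, ¬ G.Adj x y) : #A = 1 := by
  obtain ⟨⟨v, hv⟩, hAu, hAk⟩ := hA
  by_contra hne
  have herase : (A.erase v).Nonempty := by
    rw [← card_pos, card_erase_of_mem hv]
    have := card_pos.mpr ⟨v, hv⟩
    omega
  have hsum := card_cutEdges_insert_add_card_cutEdges_erase G (empty_subset A) hv
    (notMem_empty v) fun w hw => hind v hv w (mem_sdiff.mp hw).1
  have hv_cut := hG.le_card_cutEdges (singleton_nonempty v) (singleton_subset_iff.mpr hv) hAu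
  have herase_cut := hG.le_card_cutEdges herase (erase_subset v A) hAu
  rw [insert_empty, cutEdges_empty, card_empty] at hsum
  omega

end EdgeConnected

theorem subset_of_forall_maximal_ssubset_eq {α : Type*} {L : Finset (Finset α)}
    {S S' B : Finset α}
    (huniq : ∀ T ∈ L, T ⊂ S → (∀ T' ∈ L, T' ⊂ S → ¬ T ⊂ T') → T = S')
    (hB : B ∈ L) (hBS : B ⊂ S) : B ⊆ S' := by
  have hfin : {T | T ∈ L ∧ T ⊂ S}.Finite := L.finite_toSet.subset fun _ hT => hT.1
  obtain ⟨T, hBT, hT⟩ := hfin.exists_le_maximal ⟨hB, hBS⟩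
  refine huniq T hT.prop.1 hT.prop.2 (fun T' hT'L hT'S hTT' => ?_) ▸ hBT
  exact hTT'.not_subset (hT.le_of_ge ⟨hT'L, hT'S⟩ hTT'.subset)

namespace MaxLaminarFamily

variable {G : SimpleGraph V} [DecidableRel G.Adj] {k : ℕ} {r : V} {L : Finset (Finset V)}

theorem exists_ssubset_separating (hL : MaxLaminarFamily G k r L) {S : Finset V} (hS : S ∈ L)
    {x y : V} (hx : x ∈ S) (hy : y ∈ S) (hxy : G.Adj x y) :
    ∃ B ∈ L, B ⊂ S ∧ (x ∈ B ↔ y ∉ B) := by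
  obtain ⟨-, hlam, hcov, -⟩ := hL
  obtain ⟨B, hB, hcross⟩ := hcov s(x, y) hxy
  rw [crosses_mk_iff] at hcross
  refine ⟨B, hB, ?_, hcross⟩
  rcases hlam B hB S hS with hBS | hSB | hdisj
  · exact ssubset_of_subset_of_ne hBS (by rintro rfl; tauto)
  · exact absurd (hcross.mp (hSB hx)) (not_not.mpr (hSB hy))
  · have hxB : x ∉ B := fun h => notMem_empty x (hdisj ▸ mem_inter.mpr ⟨h, hx⟩)
    have hyB : y ∉ B := fun h => notMem_empty y (hdisj ▸ mem_inter.mpr ⟨h, hy⟩)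
    tauto

theorem card_eq_one_of_minimal (hG : EdgeConnected G k) (hk : 1 ≤ k)
    (hL : MaxLaminarFamily G k r L) {A : Finset V} (hA : A ∈ L) (hmin : ¬ ∃ B ∈ L, B ⊂ A) :
    #A = 1 :=
  hG.card_eq_one_of_isCut hk (hL.1 A hA).1 fun _ hx _ hy hxy =>
    let ⟨B, hB, hBA, _⟩ := hL.exists_ssubset_separating hA hx hy hxy
    hmin ⟨B, hB, hBA⟩

section Child

variable {S S' : Finset V}

theorem independent_sdiff (hL : MaxLaminarFamily G k r L) (hS : S ∈ L)
    (hchild : ∀ B ∈ L, B ⊂ S → B ⊆ S') :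
    ∀ x ∈ S \ S', ∀ y ∈ S \ S', ¬ G.Adj x y := by
  intro x hx y hy hxy
  rw [mem_sdiff] at hx hy
  obtain ⟨B, hB, hBS, hsep⟩ := hL.exists_ssubset_separating hS hx.1 hy.1 hxy
  have hBS' := hchild B hB hBS
  exact hx.2 (hBS' (hsep.mpr fun hyB => hy.2 (hBS' hyB)))

theorem insert_mem (hG : EdgeConnected G k) (hL : MaxLaminarFamily G k r L) (hS : S ∈ L)
    (hS' : S' ∈ L) (hS'S : S' ⊂ S) (hchild : ∀ B ∈ L, B ⊂ S → B ⊆ S') {v : V}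
    (hv : v ∈ S \ S') : insert v S' ∈ L := by
  obtain ⟨⟨hSne, hSu, hSk⟩, hrS⟩ := hL.1 S hS
  obtain ⟨⟨hS'ne, -, hS'k⟩, -⟩ := hL.1 S' hS'
  obtain ⟨hvS, hvS'⟩ := mem_sdiff.mp hv
  have hsub : insert v S' ⊆ S := insert_subset hvS hS'S.subset
  have hsum := card_cutEdges_insert_add_card_cutEdges_erase G hS'S.subset hvS hvS'
    (hL.independent_sdiff hS hchild v hv)
  have hinsert_cut := hG.le_card_cutEdges (insert_nonempty v S') hsub hSu
  have herase_cut := hG.le_card_cutEdges (hS'ne.mono (subset_erase.mpr ⟨hS'S.subset, hvS'⟩))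
    (erase_subset v S) hSu
  refine hL.2.2.2 _ ⟨insert_nonempty v S', fun h => hSu (univ_subset_iff.mp (h ▸ hsub)),
    by omega⟩ (fun h => hrS (hsub h)) fun A hA => ?_
  rcases hL.2.1 A hA S hS with hAS | hSA | hdisj
  · by_cases hAeq : A = S
    · exact Or.inl (hAeq ▸ hsub)
    · exact Or.inr (Or.inl ((hchild A hA (ssubset_of_subset_of_ne hAS hAeq)).trans
        (subset_insert v S')))
  · exact Or.inl (hsub.trans hSA)
  · refine Or.inr (Or.inr (subset_empty.mp fun x hx => ?_))
    rw [← hdisj]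
    exact mem_inter.mpr ⟨(mem_inter.mp hx).2, hsub (mem_inter.mp hx).1⟩

end Child

theorem singleton_mem (hL : MaxLaminarFamily G k r L) {v : V} (hvr : v ≠ r)
    (hdeg : G.degree v = k) : {v} ∈ L := by
  refine hL.2.2.2 {v} ⟨singleton_nonempty v, fun h => hvr (mem_singleton.mp (h ▸ mem_univ r)).symm,
    by rw [card_cutEdges_singleton, hdeg]⟩ (fun h => hvr (mem_singleton.mp h).symm) fun A _ => ?_
  by_cases hvA : v ∈ A
  · exact Or.inl (singleton_subset_iff.mpr hvA)
  · exact Or.inr (Or.inr (singleton_inter_of_notMem hvA))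

end MaxLaminarFamily

theorem maxLaminar_properties_general
    (k : ℕ) (hk : 1 ≤ k)
    (G : SimpleGraph V) [DecidableRel G.Adj] (hG : EdgeConnected G k)
    (r : V) (L : Finset (Finset V)) (hL : MaxLaminarFamily G k r L) :
    (∀ A ∈ L, (¬ ∃ B ∈ L, B ⊂ A) → A.card = 1) ∧
    (∀ S ∈ L, ∀ S' ∈ L, S' ⊂ S →
      (∀ T ∈ L, T ⊂ S → ¬ S' ⊂ T) →
      (∀ T ∈ L, T ⊂ S → (∀ T' ∈ L, T' ⊂ S → ¬ T ⊂ T') → T = S') →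
      ∃ v : V, S \ S' = {v} ∧ k + 1 ≤ G.degree v ∧
        Snug G k r v ∧ SnugShores G k r v S' S) := by
  refine ⟨fun A hA hmin => hL.card_eq_one_of_minimal hG hk hA hmin, ?_⟩
  intro S hS S' hS' hS'S _ huniq
  obtain ⟨⟨-, hSu, -⟩, hrS⟩ := hL.1 S hS
  obtain ⟨⟨hS'ne, -⟩, hrS'⟩ := hL.1 S' hS'
  have hchild : ∀ B ∈ L, B ⊂ S → B ⊆ S' := fun _ hB hBS =>
    subset_of_forall_maximal_ssubset_eq huniq hB hBS
  obtain ⟨v, hvS, hvS'⟩ := exists_of_ssubset hS'S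
  have hvr : v ≠ r := fun h => hrS (h ▸ hvS)
  have eq_of_mem : ∀ T ∈ L, T ⊆ S → v ∈ T → T = S := fun T hT hTS hvT =>
    by_contra fun hne => hvS' (hchild T hT (ssubset_of_subset_of_ne hTS hne) hvT)
  have hinsert : insert v S' = S :=
    eq_of_mem _ (hL.insert_mem hG hS hS' hS'S hchild (mem_sdiff.mpr ⟨hvS, hvS'⟩))
      (insert_subset hvS hS'S.subset) (mem_insert_self v S')
  have hdeg : k + 1 ≤ G.degree v := by
    have hle := hG.le_card_cutEdges (singleton_nonempty v) (singleton_subset_iff.mpr hvS) hSu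
    rw [card_cutEdges_singleton] at hle
    refine lt_of_le_of_ne hle fun hk_eq => ?_
    have hsingleton := eq_of_mem {v} (hL.singleton_mem hvr hk_eq.symm)
      (singleton_subset_iff.mpr hvS) (mem_singleton_self v)
    obtain ⟨w, hw⟩ := hS'ne
    exact hvS' (mem_singleton.mp (hsingleton ▸ hS'S.subset hw) ▸ hw)
  have hshores : SnugShores G k r v S' S :=
    ⟨(hL.1 S' hS').1, (hL.1 S hS).1, hrS', hrS, hvS', hinsert.symm⟩
  refine ⟨v, ?_, hdeg, ⟨hvr, hdeg, S', S, hshores⟩, hshores⟩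
  rw [← hinsert, insert_sdiff_of_notMem _ hvS', Finset.sdiff_self, insert_empty]

/-- Properties of a maximal edge-covering laminar family `L` of `k`-cuts
avoiding `r`: (i) every inclusion-minimal member of `L` is a singleton;
(ii) if `S ∈ L` has a unique inclusion-maximal proper subset `S' ∈ L`,
then `S ∖ S' = {v}` for a vertex `v` of degree at least `k+1`, which is snug
with snug shores `(S', S)`. -/
theorem maxLaminar_properties
    (k : ℕ) (hk : 1 ≤ k) (hV : 2 ≤ Fintype.card V)
    (G : SimpleGraph V) [DecidableRel G.Adj] (hG : EdgeConnected G k)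
    (r : V) (L : Finset (Finset V)) (hL : MaxLaminarFamily G k r L) :
    (∀ A ∈ L, (¬ ∃ B ∈ L, B ⊂ A) → A.card = 1) ∧
    (∀ S ∈ L, ∀ S' ∈ L, S' ⊂ S →
      (∀ T ∈ L, T ⊂ S → ¬ S' ⊂ T) →
      (∀ T ∈ L, T ⊂ S → (∀ T' ∈ L, T' ⊂ S → ¬ T ⊂ T') → T = S') →
      ∃ v : V, S \ S' = {v} ∧ k + 1 ≤ G.degree v ∧
        Snug G k r v ∧ SnugShores G k r v S' S) :=
  maxLaminar_properties_general k hk G hG r L hL
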